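/- With the pseudo joint density P*(Y,α) = φ(α)·∏_{j=1}^m p_j(Y_j|α)^{w_j}, the marginal pseudo likelihood obtained by integrating out α satisfies: −2 log ∫ P*(Y,α) dα = (Σ_j w_j) log 2π + log(1 + Σ_j w_j γ_j²/σ_j²) + Σ_j w_j log σ_j² + Σ_j w_j(Y_j−μ_j)²/σ_j² − (Σ_j w_j(Y_j−μ_j)γ_j/σ_j²)² / (1 + Σ_j w_j γ_j²/σ_j²). -/

import Mathlib

open Real Finset MeasureTheory

/-! Every factor of the pseudo joint density is `exp` of minus half a log-normaliser plus a squared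
residual, and the power `w j` only scales that exponent. So the integrand is
`exp (-(A α² - 2 B α + C) / 2)` with precision `A = 1 + ∑ w γ² / σ²`, and completing the square gives
`∫ = √(2π / A) · exp ((B² / A - C) / 2)`. -/

theorem integral_exp_neg_half_quadratic {A : ℝ} (hA : 0 < A) (B C : ℝ) :
    ∫ a : ℝ, exp (-(A * a ^ 2 - 2 * B * a + C) / 2)
      = √(2 * π / A) * exp ((B ^ 2 / A - C) / 2) := by
  have hsq : ∀ a : ℝ, exp (-(A * a ^ 2 - 2 * B * a + C) / 2)
      = exp ((B ^ 2 / A - C) / 2) * exp (-(A / 2) * (a - B / A) ^ 2) := fun a => by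
    rw [← exp_add]; congr 1; field_simp; ring
  simp_rw [hsq]
  rw [integral_const_mul, integral_sub_right_eq_self (fun a => exp (-(A / 2) * a ^ 2)),
    integral_gaussian, div_div_eq_mul_div, mul_comm π 2, mul_comm]

theorem neg_two_mul_log_integral_exp_neg_half_quadratic {A : ℝ} (hA : 0 < A) (B C : ℝ) :
    -2 * log (∫ a : ℝ, exp (-(A * a ^ 2 - 2 * B * a + C) / 2))
      = C - B ^ 2 / A + log A - log (2 * π) := by
  have h2π : 0 < 2 * π := by positivity
  rw [integral_exp_neg_half_quadratic hA, log_mul (by positivity) (exp_pos _).ne', log_exp,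
    log_sqrt (by positivity), log_div h2π.ne' hA.ne']
  ring

theorem inv_sqrt_mul_exp_neg_sq_div_eq_exp {s : ℝ} (hs : 0 < s) (x : ℝ) :
    (√(2 * π * s))⁻¹ * exp (-x ^ 2 / (2 * s)) = exp (-(log (2 * π * s) + x ^ 2 / s) / 2) := by
  have hinv : (√(2 * π * s))⁻¹ = exp (-log (2 * π * s) / 2) := by
    rw [neg_div, exp_neg, ← log_sqrt (by positivity), exp_log (by positivity)]
  rw [hinv, ← exp_add]
  ring_nf

theorem sum_mul_sub_mul_sq_div {ι : Type*} (s : Finset ι) (w y g v : ι → ℝ) (a : ℝ) :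
    ∑ j ∈ s, w j * (y j - g j * a) ^ 2 / v j
      = (∑ j ∈ s, w j * g j ^ 2 / v j) * a ^ 2 - 2 * (∑ j ∈ s, w j * y j * g j / v j) * a
        + ∑ j ∈ s, w j * y j ^ 2 / v j := by
  simp only [sum_mul, mul_sum, ← sum_sub_distrib, ← sum_add_distrib]
  refine sum_congr rfl fun j _ => ?_
  ring

theorem prod_inv_sqrt_mul_exp_neg_sq_div_rpow {ι : Type*} (s : Finset ι)
    (w y g v : ι → ℝ) (hv : ∀ j ∈ s, 0 < v j) (a : ℝ) :
    ∏ j ∈ s, ((√(2 * π * v j))⁻¹ * exp (-(y j - g j * a) ^ 2 / (2 * v j))) ^ w j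
      = exp (-((∑ j ∈ s, w j * g j ^ 2 / v j) * a ^ 2 - 2 * (∑ j ∈ s, w j * y j * g j / v j) * a
          + ∑ j ∈ s, w j * y j ^ 2 / v j
          + (∑ j ∈ s, w j) * log (2 * π) + ∑ j ∈ s, w j * log (v j)) / 2) := by
  have hfactor : ∀ j ∈ s, ((√(2 * π * v j))⁻¹ * exp (-(y j - g j * a) ^ 2 / (2 * v j))) ^ w j
      = exp (-(w j * (y j - g j * a) ^ 2 / v j + w j * log (2 * π) + w j * log (v j)) / 2) := by
    intro j hj
    rw [inv_sqrt_mul_exp_neg_sq_div_eq_exp (hv j hj), log_mul (by positivity) (hv j hj).ne',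
      ← exp_mul]
    ring_nf
  rw [prod_congr rfl hfactor, ← exp_sum, ← sum_mul_sub_mul_sq_div, sum_mul]
  simp only [← sum_add_distrib, sum_div, ← sum_neg_distrib]

/-- Integrating the latent variable out of the pseudo joint density gives
the marginal pseudo likelihood formula. -/
theorem marginal_pseudo_likelihood
    (m : ℕ) (μ γ σ w Y : Fin m → ℝ)
    (hσ : ∀ j, 0 < σ j) (hw : ∀ j, 0 < w j) :
    -2 * Real.log (∫ a : ℝ,
        ((Real.sqrt (2 * π))⁻¹ * Real.exp (-(a ^ 2) / 2)) *
          ∏ j, ((Real.sqrt (2 * π * σ j ^ 2))⁻¹ *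
              Real.exp (-(Y j - μ j - γ j * a) ^ 2 / (2 * σ j ^ 2))) ^ (w j))
      = (∑ j, w j) * Real.log (2 * π)
        + Real.log (1 + ∑ j, w j * γ j ^ 2 / σ j ^ 2)
        + ∑ j, w j * Real.log (σ j ^ 2)
        + ∑ j, w j * (Y j - μ j) ^ 2 / σ j ^ 2
        - (∑ j, w j * (Y j - μ j) * γ j / σ j ^ 2) ^ 2 /
            (1 + ∑ j, w j * γ j ^ 2 / σ j ^ 2) := by
  set S := ∑ j, w j * γ j ^ 2 / σ j ^ 2
  set B := ∑ j, w j * (Y j - μ j) * γ j / σ j ^ 2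
  set C := (1 + ∑ j, w j) * log (2 * π) + ∑ j, w j * log (σ j ^ 2)
    + ∑ j, w j * (Y j - μ j) ^ 2 / σ j ^ 2
  have hS : 0 ≤ S := sum_nonneg fun j _ => by have := hw j; positivity
  have hintegrand : ∀ a : ℝ,
      ((√(2 * π))⁻¹ * exp (-(a ^ 2) / 2)) *
          ∏ j, ((√(2 * π * σ j ^ 2))⁻¹ * exp (-(Y j - μ j - γ j * a) ^ 2 / (2 * σ j ^ 2))) ^ (w j)
        = exp (-((1 + S) * a ^ 2 - 2 * B * a + C) / 2) := by
    intro a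
    have hprior := inv_sqrt_mul_exp_neg_sq_div_eq_exp one_pos a
    rw [mul_one, mul_one, div_one] at hprior
    rw [hprior, prod_inv_sqrt_mul_exp_neg_sq_div_rpow univ w (fun j => Y j - μ j) γ
      (fun j => σ j ^ 2) (fun j _ => pow_pos (hσ j) 2), ← exp_add]
    congr 1
    ring
  rw [integral_congr_ae (.of_forall hintegrand),
    neg_two_mul_log_integral_exp_neg_half_quadratic (by positivity)]
  ring
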